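/- An infinite word u over a finite alphabet is eventually periodic if and only if its factor complexity function p_u(n) (the number of distinct factors of length n) is bounded. -/

import Mathlib

/-- The set of factors of length `n` of the infinite word `u`. -/
def wordFactors {A : Type*} (u : ℕ → A) (n : ℕ) : Set (List A) :=
  {w | ∃ i, w = List.ofFn (fun k : Fin n => u (i + k))}

/-- The factor complexity `p_u(n)`: the number of distinct factors of length `n`. -/
noncomputable def wordComplexity {A : Type*} (u : ℕ → A) (n : ℕ) : ℕ :=
  (wordFactors u n).ncard

/-- `u` is eventually periodic. -/
def EventuallyPeriodic {A : Type*} (u : ℕ → A) : Prop :=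
  ∃ N T, 1 ≤ T ∧ ∀ i, N ≤ i → u (i + T) = u i

/-!
If `u` is periodic with period `T` from position `N` on, every factor already occurs at a
position below `N + T`, so `p_u ≤ N + T`.

Conversely, if `p_u` is bounded it cannot increase strictly forever, so `p_u (n + 1) ≤ p_u n`
for some `n`. Every factor of length `n` is the prefix of one of length `n + 1`, so then each
factor of length `n` has a unique extension to length `n + 1`. Hence the factor of length `n + 1`
at position `i + 1` is determined by the one at position `i`. There are finitely many of them,
so two positions `a < b` carry the same factor, and from `a` on `u` repeats with period `b - a`.
-/

section Sequences

variable {β γ : Type*}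

lemma EventuallyPeriodic.comp {s : ℕ → β} (g : β → γ) (hs : EventuallyPeriodic s) :
    EventuallyPeriodic (g ∘ s) := by
  obtain ⟨N, T, hT, hper⟩ := hs
  exact ⟨N, T, hT, fun i hi => congrArg g (hper i hi)⟩

lemma exists_lt_add_eq_of_periodic_from {s : ℕ → β} {N T : ℕ} (hT : 1 ≤ T)
    (hper : ∀ i, N ≤ i → s (i + T) = s i) (i : ℕ) : ∃ j < N + T, s i = s j := by
  induction i using Nat.strong_induction_on with
  | _ i ih =>
    by_cases hi : i < N + T
    · exact ⟨i, hi, rfl⟩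
    · obtain ⟨j, hj, hij⟩ := ih (i - T) (by omega)
      refine ⟨j, hj, ?_⟩
      rw [← hij, ← hper (i - T) (by omega), Nat.sub_add_cancel (by omega)]

lemma ncard_range_le_of_periodic_from {s : ℕ → β} {N T : ℕ} (hT : 1 ≤ T)
    (hper : ∀ i, N ≤ i → s (i + T) = s i) : (Set.range s).ncard ≤ N + T := by
  have hsub : Set.range s ⊆ s '' Set.Iio (N + T) := by
    rintro _ ⟨i, rfl⟩
    obtain ⟨j, hj, hij⟩ := exists_lt_add_eq_of_periodic_from hT hper i
    exact ⟨j, hj, hij.symm⟩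
  calc (Set.range s).ncard ≤ (s '' Set.Iio (N + T)).ncard :=
        Set.ncard_le_ncard hsub ((Set.finite_Iio _).image _)
    _ ≤ (Set.Iio (N + T)).ncard := Set.ncard_image_le (Set.finite_Iio _)
    _ = N + T := by rw [← Finset.coe_Iio, Set.ncard_coe_finset, Nat.card_Iio]

lemma eventuallyPeriodic_of_finite_range {s : ℕ → β} (hs : (Set.range s).Finite)
    (hnext : ∀ i j, s i = s j → s (i + 1) = s (j + 1)) : EventuallyPeriodic s := by
  obtain ⟨a, b, hab, hsab⟩ := hs.exists_lt_map_eq_of_forall_mem (Set.mem_range_self)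
  have hshift : ∀ k, s (a + k) = s (b + k) := fun k => by
    induction k with
    | zero => exact hsab
    | succ k ih => exact hnext _ _ ih
  refine ⟨a, b - a, by omega, fun i hi => ?_⟩
  calc s (i + (b - a)) = s (b + (i - a)) := by congr 1; omega
    _ = s (a + (i - a)) := (hshift _).symm
    _ = s i := by rw [Nat.add_sub_cancel' hi]

lemma exists_succ_le_of_forall_le {f : ℕ → ℕ} {C : ℕ} (hf : ∀ n, f n ≤ C) :
    ∃ n, f (n + 1) ≤ f n := by
  by_contra! hlt
  exact (hf (C + 1)).not_gt ((strictMono_nat_of_lt_succ hlt).id_le (C + 1))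

end Sequences

section Factors

variable {A : Type*} (u : ℕ → A)

def factorAt (n i : ℕ) : List A := List.ofFn fun k : Fin n => u (i + k)

lemma wordFactors_eq_range (n : ℕ) : wordFactors u n = Set.range (factorAt u n) := by
  ext w
  exact exists_congr fun i => eq_comm

lemma factorAt_mem_wordFactors (n i : ℕ) : factorAt u n i ∈ wordFactors u n := ⟨i, rfl⟩

lemma wordFactors_finite [Finite A] (n : ℕ) : (wordFactors u n).Finite :=
  (Set.finite_range fun g : Fin n → A => List.ofFn g).subset fun _ ⟨_, hi⟩ => ⟨_, hi.symm⟩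

lemma take_factorAt (n i : ℕ) : (factorAt u (n + 1) i).take n = factorAt u n i := by
  apply List.ext_getElem
  · simp [factorAt]
  · intros
    simp only [factorAt, List.getElem_take, List.getElem_ofFn]

lemma tail_factorAt (n i : ℕ) : (factorAt u (n + 1) i).tail = factorAt u n (i + 1) := by
  apply List.ext_getElem <;> simp only [factorAt, List.length_tail, List.length_ofFn,
    List.getElem_tail, List.getElem_ofFn]
  · omega
  · intros
    ring_nf

lemma factorAt_add_of_periodic_from {N T : ℕ} (hper : ∀ i, N ≤ i → u (i + T) = u i) (n : ℕ)
    (i : ℕ) (hi : N ≤ i) : factorAt u n (i + T) = factorAt u n i := by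
  simp only [factorAt, add_right_comm i T]
  exact List.ofFn_inj.mpr (funext fun k => hper _ (by omega))

lemma getD_factorAt_zero (n i : ℕ) (d : A) : (factorAt u (n + 1) i).getD 0 d = u i := by
  simp [factorAt]

lemma image_take_wordFactors (n : ℕ) :
    List.take n '' wordFactors u (n + 1) = wordFactors u n := by
  simp only [wordFactors_eq_range, ← Set.range_comp, Function.comp_def, take_factorAt]

lemma injOn_take_of_wordComplexity_succ_le [Finite A] {n : ℕ}
    (h : wordComplexity u (n + 1) ≤ wordComplexity u n) :
    Set.InjOn (List.take n) (wordFactors u (n + 1)) := by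
  refine Set.injOn_of_ncard_image_eq (le_antisymm (Set.ncard_image_le (wordFactors_finite u _)) ?_)
    (wordFactors_finite u _)
  rwa [image_take_wordFactors]

lemma factorAt_succ_eq_of_injOn_take {n : ℕ}
    (hinj : Set.InjOn (List.take n) (wordFactors u (n + 1))) {i j : ℕ}
    (hij : factorAt u (n + 1) i = factorAt u (n + 1) j) :
    factorAt u (n + 1) (i + 1) = factorAt u (n + 1) (j + 1) := by
  refine hinj (factorAt_mem_wordFactors u _ _) (factorAt_mem_wordFactors u _ _) ?_
  rw [take_factorAt, take_factorAt, ← tail_factorAt, ← tail_factorAt, hij]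

end Factors

theorem eventually_periodic_iff_bounded_complexity {A : Type*} [Finite A] (u : ℕ → A) :
    EventuallyPeriodic u ↔ ∃ C, ∀ n, wordComplexity u n ≤ C := by
  constructor
  · rintro ⟨N, T, hT, hper⟩
    refine ⟨N + T, fun n => ?_⟩
    rw [wordComplexity, wordFactors_eq_range]
    exact ncard_range_le_of_periodic_from hT (factorAt_add_of_periodic_from u hper n)
  · rintro ⟨C, hC⟩
    obtain ⟨n, hn⟩ := exists_succ_le_of_forall_le hC
    have hwindows : EventuallyPeriodic (factorAt u (n + 1)) :=
      eventuallyPeriodic_of_finite_range (wordFactors_eq_range u _ ▸ wordFactors_finite u _)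
        fun _ _ => factorAt_succ_eq_of_injOn_take u (injOn_take_of_wordComplexity_succ_le u hn)
    simpa only [Function.comp_def, getD_factorAt_zero] using hwindows.comp (List.getD · 0 (u 0))
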